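/- arXiv:1810.12495 — 3 statements merged into one kernel-verified Lean document; each statement's English description precedes it below -/
import Mathlib

section
/- If f is continuous, positive and nondecreasing on (0,∞), F(τ) = ∫₀^τ f(s) ds, H(τ) = ((k+1)F(τ))^{1/(k+1)} for an integer k ≥ 1, and Φ(s) = ∫_s^∞ dτ/H(τ) is finite for all s > 0, then lim_{t→∞} F(t)^{k/(k+1)} / f(t) = 0. -/
open Set Filter MeasureTheory

/-!
For `0 < M ≤ s`, monotonicity of `f` and of `1 / H` gives `F s - F M ≤ (s - M) f s` and
`(s - M) / H s ≤ ∫_M^s dτ / H ≤ Φ M`. Once `F s ≥ 2 F M` (which happens eventually, as `F → ∞`)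
this yields `F s / (f s H s) ≤ 2 Φ M`, and `Φ M → 0`. Finally
`F^{k/(k+1)} / f = (k+1)^{1/(k+1)} F / (f H)`.
-/

lemma integrableOn_Ioc_of_monotoneOn_of_nonneg {f : ℝ → ℝ} {a b : ℝ}
    (hf : MonotoneOn f (Ioc a b)) (h0 : ∀ x ∈ Ioc a b, 0 ≤ f x) : IntegrableOn f (Ioc a b) := by
  rcases le_or_gt b a with hba | hab
  · simp [Ioc_eq_empty_of_le hba]
  refine .of_bound measure_Ioc_lt_top
    (aemeasurable_restrict_of_monotoneOn measurableSet_Ioc hf).aestronglyMeasurable (f b) ?_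
  filter_upwards [ae_restrict_mem measurableSet_Ioc] with x hx
  rw [Real.norm_of_nonneg (h0 x hx)]
  exact hf hx (right_mem_Ioc.2 hab) hx.2

lemma intervalIntegrable_of_monotoneOn_Ioi {f : ℝ → ℝ} (hf : MonotoneOn f (Ioi 0))
    (h0 : ∀ x, 0 < x → 0 ≤ f x) {a b : ℝ} (ha : 0 ≤ a) (hb : 0 ≤ b) :
    IntervalIntegrable f volume a b := by
  have from_zero : ∀ c, 0 ≤ c → IntervalIntegrable f volume 0 c := fun c hc =>
    (intervalIntegrable_iff_integrableOn_Ioc_of_le hc).2 <|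
      integrableOn_Ioc_of_monotoneOn_of_nonneg (hf.mono Ioc_subset_Ioi_self)
        fun x hx => h0 x hx.1
  exact (from_zero a ha).symm.trans (from_zero b hb)

lemma MonotoneOn.mul_le_intervalIntegral {f : ℝ → ℝ} {a b : ℝ} (hf : MonotoneOn f (Icc a b))
    (hab : a ≤ b) : (b - a) * f a ≤ ∫ x in a..b, f x := by
  have hfi : IntervalIntegrable f volume a b :=
    MonotoneOn.intervalIntegrable (by rwa [uIcc_of_le hab])
  simpa [mul_comm] using intervalIntegral.integral_mono_on hab intervalIntegrable_const hfi
    fun x hx => hf (left_mem_Icc.2 hab) hx hx.1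

lemma MonotoneOn.intervalIntegral_le_mul {f : ℝ → ℝ} {a b : ℝ} (hf : MonotoneOn f (Icc a b))
    (hab : a ≤ b) : ∫ x in a..b, f x ≤ (b - a) * f b := by
  have hfi : IntervalIntegrable f volume a b :=
    MonotoneOn.intervalIntegrable (by rwa [uIcc_of_le hab])
  simpa [mul_comm] using intervalIntegral.integral_mono_on hab hfi intervalIntegrable_const
    fun x hx => hf hx (right_mem_Icc.2 hab) hx.2

lemma AntitoneOn.mul_le_intervalIntegral {g : ℝ → ℝ} {a b : ℝ} (hg : AntitoneOn g (Icc a b))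
    (hab : a ≤ b) : (b - a) * g b ≤ ∫ x in a..b, g x := by
  have hgi : IntervalIntegrable g volume a b :=
    AntitoneOn.intervalIntegrable (by rwa [uIcc_of_le hab])
  simpa [mul_comm] using intervalIntegral.integral_mono_on hab intervalIntegrable_const hgi
    fun x hx => hg hx (right_mem_Icc.2 hab) hx.2

lemma intervalIntegral_mul_le_mul_intervalIntegral {f g : ℝ → ℝ} {a b : ℝ}
    (hf : MonotoneOn f (Icc a b)) (hg : AntitoneOn g (Icc a b)) (hf0 : 0 ≤ f b) (hg0 : 0 ≤ g b)
    (hab : a ≤ b) : (∫ x in a..b, f x) * g b ≤ f b * ∫ x in a..b, g x :=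
  calc (∫ x in a..b, f x) * g b ≤ (b - a) * f b * g b :=
        mul_le_mul_of_nonneg_right (hf.intervalIntegral_le_mul hab) hg0
    _ = f b * ((b - a) * g b) := by ring
    _ ≤ f b * ∫ x in a..b, g x := mul_le_mul_of_nonneg_left (hg.mul_le_intervalIntegral hab) hf0

lemma tendsto_setIntegral_Ioi_atTop_zero {g : ℝ → ℝ} {a : ℝ} (hg : IntegrableOn g (Ioi a)) :
    Tendsto (fun M => ∫ x in Ioi M, g x) atTop (nhds 0) := by
  have h := tendsto_setIntegral_of_antitone (fun M => measurableSet_Ioi)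
    (fun M N hMN => Ioi_subset_Ioi hMN) ⟨a, hg⟩
  have hempty : ⋂ M : ℝ, Ioi M = ∅ :=
    iInter_eq_empty_iff.2 fun x => ⟨x, lt_irrefl x⟩
  simpa [hempty] using h

lemma tendsto_nhds_zero_of_eventually_le_of_tendsto {α β : Type*} {l : Filter α} {l' : Filter β}
    [l'.NeBot] {u : α → ℝ} {Φ : β → ℝ} (hΦ : Tendsto Φ l' (nhds 0)) (hu : ∀ᶠ s in l, 0 ≤ u s)
    (h : ∀ᶠ M in l', ∀ᶠ s in l, u s ≤ Φ M) : Tendsto u l (nhds 0) := by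
  refine tendsto_order.2 ⟨fun ε hε => hu.mono fun s hs => hε.trans_le hs, fun ε hε => ?_⟩
  obtain ⟨M, hMε, hM⟩ := ((hΦ.eventually (gt_mem_nhds hε)).and h).exists
  exact hM.mono fun s hs => hs.trans_lt hMε

lemma rpow_one_sub_eq_rpow_mul_div_mul_rpow {x c : ℝ} (hx : 0 < x) (hc : 0 < c) (p : ℝ) :
    x ^ (1 - p) = c ^ p * (x / (c * x) ^ p) := by
  rw [Real.mul_rpow hc.le hx.le, Real.rpow_sub hx, Real.rpow_one]
  field_simp

section Primitive

variable {f F : ℝ → ℝ}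

lemma primitive_sub_eq_intervalIntegral (hf : MonotoneOn f (Ioi 0)) (hf0 : ∀ x, 0 < x → 0 ≤ f x)
    (hF : ∀ τ, F τ = ∫ s in (0:ℝ)..τ, f s) {a b : ℝ} (ha : 0 ≤ a) (hb : 0 ≤ b) :
    F b - F a = ∫ x in a..b, f x := by
  rw [hF, hF]
  exact intervalIntegral.integral_interval_sub_left
    (intervalIntegrable_of_monotoneOn_Ioi hf hf0 le_rfl hb)
    (intervalIntegrable_of_monotoneOn_Ioi hf hf0 le_rfl ha)

lemma primitive_pos (hf : MonotoneOn f (Ioi 0)) (hf0 : ∀ x, 0 < x → 0 < f x)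
    (hF : ∀ τ, F τ = ∫ s in (0:ℝ)..τ, f s) {t : ℝ} (ht : 0 < t) : 0 < F t := by
  rw [hF]
  exact intervalIntegral.intervalIntegral_pos_of_pos_on
    (intervalIntegrable_of_monotoneOn_Ioi hf (fun x hx => (hf0 x hx).le) le_rfl ht.le)
    (fun x hx => hf0 x hx.1) ht

lemma mul_le_primitive_sub (hf : MonotoneOn f (Ioi 0)) (hf0 : ∀ x, 0 < x → 0 ≤ f x)
    (hF : ∀ τ, F τ = ∫ s in (0:ℝ)..τ, f s) {a b : ℝ} (ha : 0 < a) (hab : a ≤ b) :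
    (b - a) * f a ≤ F b - F a := by
  rw [primitive_sub_eq_intervalIntegral hf hf0 hF ha.le (ha.le.trans hab)]
  exact (hf.mono fun x hx => ha.trans_le hx.1).mul_le_intervalIntegral hab

lemma primitive_monotoneOn (hf : MonotoneOn f (Ioi 0)) (hf0 : ∀ x, 0 < x → 0 ≤ f x)
    (hF : ∀ τ, F τ = ∫ s in (0:ℝ)..τ, f s) : MonotoneOn F (Ioi 0) := fun a ha _ _ hab => by
  nlinarith [mul_le_primitive_sub hf hf0 hF ha hab, hf0 a ha]

lemma tendsto_primitive_atTop (hf : MonotoneOn f (Ioi 0)) (hf0 : ∀ x, 0 < x → 0 < f x)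
    (hF : ∀ τ, F τ = ∫ s in (0:ℝ)..τ, f s) : Tendsto F atTop atTop := by
  have hlin : Tendsto (fun t => F 1 + (t - 1) * f 1) atTop atTop :=
    tendsto_atTop_add_const_left _ _
      ((tendsto_atTop_add_const_right _ _ tendsto_id).atTop_mul_const (hf0 1 one_pos))
  refine tendsto_atTop_mono' _ ?_ hlin
  filter_upwards [eventually_ge_atTop 1] with t ht
  linarith [mul_le_primitive_sub hf (fun x hx => (hf0 x hx).le) hF one_pos ht]

lemma tendsto_primitive_mul_div_atTop_zero {g : ℝ → ℝ} {a : ℝ} (hf : MonotoneOn f (Ioi 0))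
    (hf0 : ∀ x, 0 < x → 0 < f x) (hF : ∀ τ, F τ = ∫ s in (0:ℝ)..τ, f s)
    (hg : AntitoneOn g (Ioi 0)) (hg0 : ∀ x, 0 < x → 0 ≤ g x) (hgi : IntegrableOn g (Ioi a)) :
    Tendsto (fun s => F s * g s / f s) atTop (nhds 0) := by
  have htail := (tendsto_setIntegral_Ioi_atTop_zero hgi).const_mul 2
  rw [mul_zero] at htail
  refine tendsto_nhds_zero_of_eventually_le_of_tendsto htail ?_ ?_
  · filter_upwards [eventually_gt_atTop 0] with s hs
    exact div_nonneg (mul_nonneg (primitive_pos hf hf0 hF hs).le (hg0 s hs)) (hf0 s hs).le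
  filter_upwards [eventually_gt_atTop 0, eventually_ge_atTop a] with M hM haM
  filter_upwards [eventually_ge_atTop M,
    (tendsto_primitive_atTop hf hf0 hF).eventually_ge_atTop (2 * F M)] with s hMs hFs
  have hs : 0 < s := hM.trans_le hMs
  have hIcc : Icc M s ⊆ Ioi 0 := fun x hx => hM.trans_le hx.1
  have hchebyshev := intervalIntegral_mul_le_mul_intervalIntegral (hf.mono hIcc) (hg.mono hIcc)
    (hf0 s hs).le (hg0 s hs) hMs
  rw [← primitive_sub_eq_intervalIntegral hf (fun x hx => (hf0 x hx).le) hF hM.le hs.le]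
    at hchebyshev
  have hgM : ∫ x in M..s, g x ≤ ∫ x in Ioi M, g x := by
    rw [intervalIntegral.integral_of_le hMs]
    refine setIntegral_mono_set (hgi.mono_set (Ioi_subset_Ioi haM)) ?_
      Ioc_subset_Ioi_self.eventuallyLE
    filter_upwards [ae_restrict_mem measurableSet_Ioi] with x hx
    exact hg0 x (hM.trans hx)
  rw [div_le_iff₀ (hf0 s hs)]
  calc F s * g s ≤ 2 * ((F s - F M) * g s) := by nlinarith [hg0 s hs]
    _ ≤ 2 * (f s * ∫ x in M..s, g x) := by gcongr
    _ ≤ 2 * (f s * ∫ x in Ioi M, g x) := by gcongr; exact (hf0 s hs).le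
    _ = 2 * (∫ x in Ioi M, g x) * f s := by ring

end Primitive

theorem stmt0_general (k : ℕ) (f F H : ℝ → ℝ)
    (hfpos : ∀ s, 0 < s → 0 < f s)
    (hfmono : MonotoneOn f (Ioi 0))
    (hF : ∀ τ, F τ = ∫ s in (0:ℝ)..τ, f s)
    (hH : ∀ τ, H τ = (((k:ℝ) + 1) * F τ) ^ ((1:ℝ)/((k:ℝ)+1)))
    (hΦ : ∀ s, 0 < s → IntegrableOn (fun τ => 1 / H τ) (Ioi s)) :
    Tendsto (fun t => (F t) ^ ((k:ℝ)/((k:ℝ)+1)) / f t) atTop (nhds 0) := by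
  have hk : (0:ℝ) < k + 1 := by positivity
  have hFpos : ∀ τ, 0 < τ → 0 < F τ := fun τ => primitive_pos hfmono hfpos hF
  have hHpos : ∀ τ, 0 < τ → 0 < H τ := fun τ hτ => by
    rw [hH]; exact Real.rpow_pos_of_pos (mul_pos hk (hFpos τ hτ)) _
  have hHanti : AntitoneOn (fun τ => 1 / H τ) (Ioi 0) := fun a ha b hb hab => by
    refine one_div_le_one_div_of_le (hHpos a ha) ?_
    rw [hH, hH]
    gcongr
    · exact (mul_pos hk (hFpos a ha)).le
    · exact primitive_monotoneOn hfmono (fun x hx => (hfpos x hx).le) hF ha hb hab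
  have hlim := tendsto_primitive_mul_div_atTop_zero hfmono hfpos hF hHanti
    (fun τ hτ => (one_div_pos.2 (hHpos τ hτ)).le) (hΦ 1 one_pos)
  have hrewrite : ∀ t, 0 < t → ((k:ℝ) + 1) ^ ((1:ℝ)/((k:ℝ)+1)) * (F t * (1 / H t) / f t) =
      F t ^ ((k:ℝ)/((k:ℝ)+1)) / f t := fun t ht => by
    rw [hH, show (k:ℝ)/((k:ℝ)+1) = 1 - 1/((k:ℝ)+1) by field_simp; ring,
      rpow_one_sub_eq_rpow_mul_div_mul_rpow (hFpos t ht) hk]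
    ring
  simpa using (hlim.const_mul _).congr' ((eventually_gt_atTop 0).mono hrewrite)

theorem stmt0 (k : ℕ) (hk : 1 ≤ k) (f F H : ℝ → ℝ)
    (hfc : ContinuousOn f (Ioi 0))
    (hfpos : ∀ s, 0 < s → 0 < f s)
    (hfmono : MonotoneOn f (Ioi 0))
    (hF : ∀ τ, F τ = ∫ s in (0:ℝ)..τ, f s)
    (hH : ∀ τ, H τ = (((k:ℝ) + 1) * F τ) ^ ((1:ℝ)/((k:ℝ)+1)))
    (hΦ : ∀ s, 0 < s → IntegrableOn (fun τ => 1 / H τ) (Ioi s)) :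
    Tendsto (fun t => (F t) ^ ((k:ℝ)/((k:ℝ)+1)) / f t) atTop (nhds 0) :=
  stmt0_general k f F H hfpos hfmono hF hH hΦ
end

section
/- Suppose additionally that C_f = lim_{s→∞} H'(s) ∫_s^∞ dτ/H(τ) exists with C_f > 0. Then lim_{t→0⁺} (−φ'(t))/(t·φ''(t)) = 1/C_f, equivalently lim_{t→0⁺} ((k+1)F(φ(t)))^{k/(k+1)} / (t·f(φ(t))) = 1/C_f. -/
/-!
Since `Φ(φ t) = t` and `Φ` is positive and decreasing, `φ t → ∞` as `t → 0⁺`. The chain rule gives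
`H' = f / ((k+1) F)^{k/(k+1)}`, so the quotient in question is exactly `(H'(s) Φ(s))⁻¹` at `s = φ t`,
and the hypothesis on `C_f` finishes the argument.
-/

open Set Filter MeasureTheory Topology

section IntegralFromZero

variable {f : ℝ → ℝ} (hfc : ContinuousOn f (Ioi 0)) (hfmono : MonotoneOn f (Ioi 0))
include hfc hfmono

/-- On `(0, b]` a nonnegative monotone function is bounded by its value at `b`. -/
theorem MonotoneOn.intervalIntegrable_zero_of_nonneg (hf0 : ∀ s, 0 < s → 0 ≤ f s)
    {b : ℝ} (hb : 0 < b) : IntervalIntegrable f volume 0 b := by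
  rw [intervalIntegrable_iff_integrableOn_Ioc_of_le hb.le]
  refine ⟨(hfc.mono Ioc_subset_Ioi_self).aestronglyMeasurable measurableSet_Ioc,
    HasFiniteIntegral.restrict_of_bounded (C := f b) (by simp [Real.volume_Ioc]) ?_⟩
  filter_upwards [ae_restrict_mem measurableSet_Ioc] with x hx
  rw [Real.norm_eq_abs, abs_of_nonneg (hf0 x hx.1)]
  exact hfmono hx.1 hb hx.2

theorem MonotoneOn.hasDerivAt_integral_zero (hf0 : ∀ s, 0 < s → 0 ≤ f s) {s : ℝ} (hs : 0 < s) :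
    HasDerivAt (fun τ => ∫ u in (0:ℝ)..τ, f u) (f s) s :=
  intervalIntegral.integral_hasDerivAt_right
    (hfmono.intervalIntegrable_zero_of_nonneg hfc hf0 hs)
    (hfc.stronglyMeasurableAtFilter isOpen_Ioi s hs) (hfc.continuousAt (Ioi_mem_nhds hs))

theorem MonotoneOn.integral_zero_pos (hfpos : ∀ s, 0 < s → 0 < f s) {s : ℝ} (hs : 0 < s) :
    0 < ∫ u in (0:ℝ)..s, f u :=
  intervalIntegral.intervalIntegral_pos_of_pos_on
    (hfmono.intervalIntegrable_zero_of_nonneg hfc (fun x hx => (hfpos x hx).le) hs)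
    (fun x hx => hfpos x hx.1) hs

end IntegralFromZero

theorem hasDerivAt_mul_rpow_inv {F : ℝ → ℝ} {F' s k : ℝ} (hk : 0 < k + 1)
    (hF : HasDerivAt F F' s) (hpos : 0 < F s) :
    HasDerivAt (fun τ => ((k + 1) * F τ) ^ (1 / (k + 1)))
      (F' / ((k + 1) * F s) ^ (k / (k + 1))) s := by
  have hA : 0 < (k + 1) * F s := mul_pos hk hpos
  refine ((Real.hasDerivAt_rpow_const (p := 1 / (k + 1)) (Or.inl hA.ne')).comp s
    (hF.const_mul (k + 1))).congr_deriv ?_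
  have hexp : 1 / (k + 1) - 1 = -(k / (k + 1)) := by field_simp; ring
  rw [hexp, Real.rpow_neg hA.le]
  field_simp

section TailIntegral

variable {g : ℝ → ℝ} (hg : ∀ x, 0 < x → 0 < g x) (hgint : ∀ s, 0 < s → IntegrableOn g (Ioi s))
include hg hgint

theorem setIntegral_Ioi_pos_of_pos {s : ℝ} (hs : 0 < s) : 0 < ∫ τ in Ioi s, g τ := by
  have hnonneg : 0 ≤ᵐ[volume.restrict (Ioi s)] g := by
    filter_upwards [ae_restrict_mem measurableSet_Ioi] with x hx
    exact (hg x (hs.trans hx)).le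
  have hsupp : Function.support g ∩ Ioi s = Ioi s :=
    inter_eq_right.2 fun x hx => (hg x (hs.trans hx)).ne'
  rw [setIntegral_pos_iff_support_of_nonneg_ae hnonneg (hgint s hs), hsupp, Real.volume_Ioi]
  exact ENNReal.zero_lt_top

theorem setIntegral_Ioi_anti_of_pos {a b : ℝ} (ha : 0 < a) (hab : a ≤ b) :
    ∫ τ in Ioi b, g τ ≤ ∫ τ in Ioi a, g τ := by
  refine setIntegral_mono_set (hgint a ha) ?_ (Ioi_subset_Ioi hab).eventuallyLE
  filter_upwards [ae_restrict_mem measurableSet_Ioi] with x hx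
  exact (hg x (ha.trans hx)).le

theorem tendsto_atTop_of_setIntegral_Ioi_eq {φ : ℝ → ℝ} (hφpos : ∀ t, 0 < t → 0 < φ t)
    (hφ : ∀ t, 0 < t → ∫ τ in Ioi (φ t), g τ = t) : Tendsto φ (𝓝[>] 0) atTop := by
  refine tendsto_atTop.2 fun M => ?_
  have hM : 0 < max M 1 := one_pos.trans_le (le_max_right M 1)
  filter_upwards [Ioo_mem_nhdsGT (setIntegral_Ioi_pos_of_pos hg hgint hM)] with t ht
  by_contra! hlt
  have hle := setIntegral_Ioi_anti_of_pos hg hgint (hφpos t ht.1) (hlt.le.trans (le_max_left M 1))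
  rw [hφ t ht.1] at hle
  exact ht.2.not_ge hle

end TailIntegral

theorem stmt8_general (k : ℕ) (f F H Φ φ : ℝ → ℝ) (Cf : ℝ)
    (hf : ContDiffOn ℝ 1 f (Ioi 0))
    (hfpos : ∀ s, 0 < s → 0 < f s)
    (hfmono : MonotoneOn f (Ioi 0))
    (hF : ∀ τ, F τ = ∫ s in (0:ℝ)..τ, f s)
    (hH : ∀ τ, H τ = (((k:ℝ) + 1) * F τ) ^ ((1:ℝ)/((k:ℝ)+1)))
    (hΦint : ∀ s, 0 < s → IntegrableOn (fun τ => 1 / H τ) (Ioi s))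
    (hΦ : ∀ s, 0 < s → Φ s = ∫ τ in Ioi s, 1 / H τ)
    (hφpos : ∀ t, 0 < t → 0 < φ t)
    (hφ : ∀ t, 0 < t → Φ (φ t) = t)
    (hCfpos : 0 < Cf)
    (hCf : Tendsto (fun s => deriv H s * Φ s) atTop (nhds Cf)) :
    Tendsto (fun t => (((k:ℝ) + 1) * F (φ t)) ^ ((k:ℝ)/((k:ℝ)+1)) / (t * f (φ t)))
      (nhdsWithin 0 (Ioi 0)) (nhds (1 / Cf)) := by
  have hfc := hf.continuousOn
  have hFpos (s : ℝ) (hs : 0 < s) : 0 < F s := hF s ▸ hfmono.integral_zero_pos hfc hfpos hs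
  have hH' (s : ℝ) (hs : 0 < s) :
      HasDerivAt H (f s / (((k:ℝ) + 1) * F s) ^ ((k:ℝ)/((k:ℝ)+1))) s := by
    rw [funext hH]
    refine hasDerivAt_mul_rpow_inv (by positivity) ?_ (hFpos s hs)
    rw [funext hF]
    exact hfmono.hasDerivAt_integral_zero hfc (fun x hx => (hfpos x hx).le) hs
  have hHpos (s : ℝ) (hs : 0 < s) : 0 < H s :=
    hH s ▸ Real.rpow_pos_of_pos (by have := hFpos s hs; positivity) _
  have hφtop : Tendsto φ (𝓝[>] 0) atTop :=
    tendsto_atTop_of_setIntegral_Ioi_eq (fun x hx => one_div_pos.2 (hHpos x hx))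
      hΦint hφpos fun t ht => (hΦ _ (hφpos t ht)).symm.trans (hφ t ht)
  rw [one_div]
  refine ((hCf.comp hφtop).inv₀ hCfpos.ne').congr' ?_
  filter_upwards [self_mem_nhdsWithin] with t (ht : 0 < t)
  simp only [Function.comp_apply, (hH' _ (hφpos t ht)).deriv, hφ t ht]
  rw [div_mul_eq_mul_div, inv_div, mul_comm (f (φ t))]

theorem stmt8 (k : ℕ) (hk : 1 ≤ k) (f F H Φ φ : ℝ → ℝ) (Cf : ℝ)
    (hf : ContDiffOn ℝ 1 f (Ioi 0))
    (hfpos : ∀ s, 0 < s → 0 < f s)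
    (hfmono : MonotoneOn f (Ioi 0))
    (hF : ∀ τ, F τ = ∫ s in (0:ℝ)..τ, f s)
    (hH : ∀ τ, H τ = (((k:ℝ) + 1) * F τ) ^ ((1:ℝ)/((k:ℝ)+1)))
    (hΦint : ∀ s, 0 < s → IntegrableOn (fun τ => 1 / H τ) (Ioi s))
    (hΦ : ∀ s, 0 < s → Φ s = ∫ τ in Ioi s, 1 / H τ)
    (hφpos : ∀ t, 0 < t → 0 < φ t)
    (hφ : ∀ t, 0 < t → Φ (φ t) = t)
    (hCfpos : 0 < Cf)
    (hCf : Tendsto (fun s => deriv H s * Φ s) atTop (nhds Cf)) :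
    Tendsto (fun t => (((k:ℝ) + 1) * F (φ t)) ^ ((k:ℝ)/((k:ℝ)+1)) / (t * f (φ t)))
      (nhdsWithin 0 (Ioi 0)) (nhds (1 / Cf)) :=
  stmt8_general k f F H Φ φ Cf hf hfpos hfmono hF hH hΦint hΦ hφpos hφ hCfpos hCf
end

section
/- Let h ∈ C²(ℝ) and g ∈ C²(Ω) for Ω ⊆ ℝⁿ open. Then at each point of Ω, S_k(D²(h∘g)) = (h'(g))^{k−1} h''(g) · Σ_{i,j} S_k^{ij}(D²g) g_i g_j + (h'(g))^k S_k(D²g), where S_k^{ij}(A) = ∂S_k/∂A_{ij} and S_k is the k-th elementary symmetric function of the eigenvalues. -/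
/-!
Since `D²(h ∘ g) = h'(g) D²g + h''(g) ∇g ∇gᵀ`, everything reduces to the behaviour of `S_k` along
rank-one perturbations. On each principal minor this is the matrix determinant lemma
`det (a M + u vᵀ) = aᵏ det M + aᵏ⁻¹ vᵀ adj(M) u`. Summing over the minors, `S_k (a B + u vᵀ)` is
`aᵏ S_k(B)` plus `aᵏ⁻¹` times a bilinear form in `(v, u)` whose coefficients are the partial
derivatives `S_k^{ij}(B)`; take `u = h''(g) ∇g`, `v = ∇g`.
-/

open Finset Matrix

namespace Matrix

variable {n α : Type*} [Fintype n] [DecidableEq n] [CommRing α]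

theorem det_scalar_add_vecMulVec (c : α) (u v : n → α) :
    (scalar n c + vecMulVec u v).det
      = c ^ Fintype.card n + c ^ (Fintype.card n - 1) * (v ⬝ᵥ u) := by
  rw [← sub_neg_eq_add, ← neg_vecMulVec, ← eval_charpoly, charpoly_vecMulVec]
  simp only [neg_dotProduct, dotProduct_comm u v, neg_smul, sub_neg_eq_add, Polynomial.eval_add,
    Polynomial.eval_pow, Polynomial.eval_X, Polynomial.eval_smul, smul_eq_mul, add_right_inj]
  ring

theorem det_add_vecMulVec_of_isLeftRegular {A : Matrix n n α} (hA : IsLeftRegular A.det)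
    (u v : n → α) :
    (A + vecMulVec u v).det = A.det + v ⬝ᵥ (adjugate A *ᵥ u) := by
  cases isEmpty_or_nonempty n
  · simp
  have hcard : Fintype.card n - 1 + 1 = Fintype.card n := Nat.sub_add_cancel Fintype.card_pos
  apply hA.pow (Fintype.card n - 1)
  calc A.det ^ (Fintype.card n - 1) * (A + vecMulVec u v).det
      = (adjugate A * (A + vecMulVec u v)).det := by rw [det_mul, det_adjugate]
    _ = (scalar n A.det + vecMulVec (adjugate A *ᵥ u) v).det := by
      rw [Matrix.mul_add, adjugate_mul, mul_vecMulVec, smul_one_eq_diagonal]; rfl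
    _ = A.det ^ (Fintype.card n - 1) * (A.det + v ⬝ᵥ (adjugate A *ᵥ u)) := by
      rw [det_scalar_add_vecMulVec, ← hcard, Nat.add_sub_cancel]; ring

open Polynomial in
theorem det_add_vecMulVec (A : Matrix n n α) (u v : n → α) :
    (A + vecMulVec u v).det = A.det + v ⬝ᵥ (adjugate A *ᵥ u) := by
  -- specialize the identity for `X • 1 + A`, whose determinant is monic, at `X = 0`
  let ev : α[X] →+* α := evalRingHom 0
  have hA : ev.mapMatrix ((X : α[X]) • 1 + A.map C) = A := by ext; simp [ev]
  have hC : ∀ w : n → α, ev ∘ C ∘ w = w := fun w => by ext; simp [ev]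
  have hvec : ev.mapMatrix (vecMulVec (C ∘ u) (C ∘ v)) = vecMulVec u v := by
    ext; simp [ev, vecMulVec]
  have hmulVec : ∀ (M : Matrix n n α[X]) w, ev ∘ (M *ᵥ w) = ev.mapMatrix M *ᵥ (ev ∘ w) :=
    fun M w => _root_.funext (RingHom.map_mulVec ev M w)
  have hreg : IsLeftRegular ((X : α[X]) • 1 + A.map C).det :=
    (Monic.isRegular (leadingCoeff_det_X_one_add_C A)).left
  have key := congrArg ev (det_add_vecMulVec_of_isLeftRegular hreg (C ∘ u) (C ∘ v))
  rwa [RingHom.map_det, map_add ev.mapMatrix, hA, hvec, map_add, RingHom.map_det, hA,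
    RingHom.map_dotProduct, hC, hmulVec, RingHom.map_adjugate, hA, hC] at key

theorem det_smul_add_vecMulVec (a : α) (A : Matrix n n α) (u v : n → α) :
    (a • A + vecMulVec u v).det
      = a ^ Fintype.card n * A.det + a ^ (Fintype.card n - 1) * (v ⬝ᵥ (adjugate A *ᵥ u)) := by
  rw [det_add_vecMulVec, det_smul, adjugate_smul, smul_mulVec, dotProduct_smul, smul_eq_mul]

def principalSubmatrix (A : Matrix n n α) (s : Finset n) : Matrix s s α :=
  A.submatrix Subtype.val Subtype.val

/-- For symmetric `A` this is `σ_k` of the eigenvalues of `A`. -/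
def principalMinorSum (k : ℕ) (A : Matrix n n α) : α :=
  ∑ s ∈ univ.powersetCard k, (A.principalSubmatrix s).det

def principalMinorAdjForm (k : ℕ) (A : Matrix n n α) : (n → α) →ₗ[α] (n → α) →ₗ[α] α :=
  ∑ s ∈ univ.powersetCard k, (toLinearMap₂' α (A.principalSubmatrix s).adjugate).compl₁₂
    (LinearMap.funLeft α α Subtype.val) (LinearMap.funLeft α α Subtype.val)

theorem principalMinorSum_smul_add_vecMulVec (k : ℕ) (a : α) (A : Matrix n n α) (u v : n → α) :
    principalMinorSum k (a • A + vecMulVec u v)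
      = a ^ k * principalMinorSum k A + a ^ (k - 1) * principalMinorAdjForm k A v u := by
  simp only [principalMinorSum, principalMinorAdjForm, LinearMap.sum_apply,
    mul_sum, ← sum_add_distrib]
  refine sum_congr rfl fun s hs => ?_
  have hcard : Fintype.card s = k := by simpa using (mem_powersetCard.mp hs).2
  have hsub : (a • A + vecMulVec u v).principalSubmatrix s
      = a • A.principalSubmatrix s + vecMulVec (u ∘ Subtype.val) (v ∘ Subtype.val) :=
    rfl
  rw [hsub, det_smul_add_vecMulVec, hcard, LinearMap.compl₁₂_apply, toLinearMap₂'_apply']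
  rfl

theorem principalMinorSum_add_smul_single (k : ℕ) (A : Matrix n n α) (i j : n) (t : α) :
    principalMinorSum k (A + t • single i j 1)
      = principalMinorSum k A + t * principalMinorAdjForm k A (Pi.single j 1) (Pi.single i 1) := by
  rw [single_eq_single_vecMulVec_single, ← vecMulVec_smul, ← one_smul α A,
    principalMinorSum_smul_add_vecMulVec]
  simp

end Matrix

theorem LinearMap.apply_apply_eq_sum_single {ι R : Type*} [Fintype ι] [DecidableEq ι]
    [CommSemiring R] (B : (ι → R) →ₗ[R] (ι → R) →ₗ[R] R) (v w : ι → R) :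
    B v w = ∑ i, ∑ j, B (Pi.single i 1) (Pi.single j 1) * v i * w j := by
  rw [← Matrix.toLinearMap₂'_toMatrix' (R := R) B, Matrix.toLinearMap₂'_apply]
  simp only [LinearMap.toMatrix₂'_apply, Matrix.toLinearMap₂'_toMatrix', smul_eq_mul]
  exact sum_congr rfl fun i _ => sum_congr rfl fun j _ => by ring

namespace Matrix

variable {n 𝕜 : Type*} [Fintype n] [DecidableEq n] [NontriviallyNormedField 𝕜]

theorem deriv_principalMinorSum_add_smul_single (k : ℕ) (A : Matrix n n 𝕜) (i j : n) :
    deriv (fun t : 𝕜 => principalMinorSum k (A + t • single i j 1)) 0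
      = principalMinorAdjForm k A (Pi.single j 1) (Pi.single i 1) := by
  simp only [principalMinorSum_add_smul_single]
  exact ((hasDerivAt_mul_const _).const_add _).deriv

theorem principalMinorSum_smul_add_smul_vecMulVec_self (k : ℕ) (a b : 𝕜) (A : Matrix n n 𝕜)
    (w : n → 𝕜) :
    principalMinorSum k (a • A + b • vecMulVec w w)
      = a ^ (k - 1) * b * ∑ i, ∑ j,
          deriv (fun t : 𝕜 => principalMinorSum k (A + t • single i j 1)) 0 * w i * w j
        + a ^ k * principalMinorSum k A := by
  simp only [deriv_principalMinorSum_add_smul_single]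
  rw [← smul_vecMulVec, principalMinorSum_smul_add_vecMulVec, map_smul, smul_eq_mul,
    LinearMap.apply_apply_eq_sum_single, sum_comm, add_comm]
  simp only [mul_sum]
  congr 1
  exact sum_congr rfl fun i _ => sum_congr rfl fun j _ => by ring

end Matrix

theorem fderiv_fderiv_comp_apply {E : Type*} [NormedAddCommGroup E] [NormedSpace ℝ E]
    {h : ℝ → ℝ} {g : E → ℝ} {x : E} (hh : Differentiable ℝ h)
    (hh' : DifferentiableAt ℝ (deriv h) (g x)) (hg : ∀ᶠ y in nhds x, DifferentiableAt ℝ g y)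
    (hg' : DifferentiableAt ℝ (fderiv ℝ g) x) (v w : E) :
    fderiv ℝ (fun y => fderiv ℝ (h ∘ g) y v) x w
      = deriv (deriv h) (g x) * (fderiv ℝ g x w * fderiv ℝ g x v)
        + deriv h (g x) * fderiv ℝ (fun y => fderiv ℝ g y v) x w := by
  have hchain : (fun y => fderiv ℝ (h ∘ g) y v) =ᶠ[nhds x]
      fun y => deriv h (g y) * fderiv ℝ g y v := by
    filter_upwards [hg] with y hy
    rw [((hh (g y)).hasDerivAt.comp_hasFDerivAt y hy.hasFDerivAt).fderiv]
    rfl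
  have hdh : HasFDerivAt (fun y => deriv h (g y)) (deriv (deriv h) (g x) • fderiv ℝ g x) x :=
    hh'.hasDerivAt.comp_hasFDerivAt x hg.self_of_nhds.hasFDerivAt
  have hdg : DifferentiableAt ℝ (fun y => fderiv ℝ g y v) x :=
    (ContinuousLinearMap.apply ℝ ℝ v).differentiableAt.comp x hg'
  rw [hchain.fderiv_eq, fderiv_fun_mul hdh.differentiableAt hdg, hdh.fderiv]
  simp only [_root_.add_apply, _root_.smul_apply, smul_eq_mul]
  ring

theorem stmt13_general (n k : ℕ)
    (Ω : Set (Fin n → ℝ)) (hΩ : IsOpen Ω)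
    (h : ℝ → ℝ) (hh : ContDiff ℝ 2 h)
    (g : (Fin n → ℝ) → ℝ) (hg : ContDiffOn ℝ 2 g Ω)
    (Sk : Matrix (Fin n) (Fin n) ℝ → ℝ)
    (hSk : ∀ A : Matrix (Fin n) (Fin n) ℝ,
      Sk A = ∑ s ∈ (Finset.univ : Finset (Fin n)).powersetCard k,
        (A.submatrix (fun i : {x // x ∈ s} => (i : Fin n))
                     (fun j : {x // x ∈ s} => (j : Fin n))).det)
    (D2 : ((Fin n → ℝ) → ℝ) → (Fin n → ℝ) → Matrix (Fin n) (Fin n) ℝ)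
    (hD2 : ∀ u x i j, D2 u x i j =
      fderiv ℝ (fun y => fderiv ℝ u y (Pi.single j 1)) x (Pi.single i 1))
    (x : Fin n → ℝ) (hx : x ∈ Ω) :
    Sk (D2 (h ∘ g) x) =
      (deriv h (g x)) ^ (k - 1) * deriv (deriv h) (g x) *
        (∑ i, ∑ j,
          (deriv (fun t : ℝ => Sk (D2 g x + t • Matrix.single i j 1)) 0) *
            (fderiv ℝ g x (Pi.single i 1)) * (fderiv ℝ g x (Pi.single j 1)))
      + (deriv h (g x)) ^ k * Sk (D2 g x) := by
  have hSk_eq : Sk = principalMinorSum k := funext hSk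
  have hh₁ : Differentiable ℝ h := hh.differentiable two_ne_zero
  have hh₂ : Differentiable ℝ (deriv h) :=
    (contDiff_succ_iff_deriv.mp hh).2.2.differentiable one_ne_zero
  have hg₁ : ∀ᶠ y in nhds x, DifferentiableAt ℝ g y := by
    filter_upwards [hΩ.mem_nhds hx] with y hy
    exact (hg.contDiffAt (hΩ.mem_nhds hy)).differentiableAt two_ne_zero
  have hg₂ : DifferentiableAt ℝ (fderiv ℝ g) x :=
    ((hg.contDiffAt (hΩ.mem_nhds hx)).fderiv_right (m := 1) one_add_one_eq_two.le).differentiableAt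
      one_ne_zero
  have hHessian : D2 (h ∘ g) x = deriv h (g x) • D2 g x +
      deriv (deriv h) (g x) • vecMulVec (fun i => fderiv ℝ g x (Pi.single i 1))
        (fun i => fderiv ℝ g x (Pi.single i 1)) := by
    ext i j
    simp only [Matrix.add_apply, Matrix.smul_apply, vecMulVec_apply, smul_eq_mul, hD2]
    rw [fderiv_fderiv_comp_apply hh₁ (hh₂ _) hg₁ hg₂]
    ring
  rw [hHessian, hSk_eq, principalMinorSum_smul_add_smul_vecMulVec_self]

theorem stmt13 (n k : ℕ) (hn : 1 ≤ n) (hk : 1 ≤ k) (hkn : k ≤ n)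
    (Ω : Set (Fin n → ℝ)) (hΩ : IsOpen Ω)
    (h : ℝ → ℝ) (hh : ContDiff ℝ 2 h)
    (g : (Fin n → ℝ) → ℝ) (hg : ContDiffOn ℝ 2 g Ω)
    (Sk : Matrix (Fin n) (Fin n) ℝ → ℝ)
    (hSk : ∀ A : Matrix (Fin n) (Fin n) ℝ,
      Sk A = ∑ s ∈ (Finset.univ : Finset (Fin n)).powersetCard k,
        (A.submatrix (fun i : {x // x ∈ s} => (i : Fin n))
                     (fun j : {x // x ∈ s} => (j : Fin n))).det)
    (D2 : ((Fin n → ℝ) → ℝ) → (Fin n → ℝ) → Matrix (Fin n) (Fin n) ℝ)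
    (hD2 : ∀ u x i j, D2 u x i j =
      fderiv ℝ (fun y => fderiv ℝ u y (Pi.single j 1)) x (Pi.single i 1))
    (x : Fin n → ℝ) (hx : x ∈ Ω) :
    Sk (D2 (h ∘ g) x) =
      (deriv h (g x)) ^ (k - 1) * deriv (deriv h) (g x) *
        (∑ i, ∑ j,
          (deriv (fun t : ℝ => Sk (D2 g x + t • Matrix.single i j 1)) 0) *
            (fderiv ℝ g x (Pi.single i 1)) * (fderiv ℝ g x (Pi.single j 1)))
      + (deriv h (g x)) ^ k * Sk (D2 g x) :=
  stmt13_general n k Ω hΩ h hh g hg Sk hSk D2 hD2 x hx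
end
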